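/- Let S : [0,1] × {0,1} → ℝ be a proper scoring rule that is L-Lipschitz in its first argument, let m ≥ 1 be a natural number, and let q ∈ [0,1]. Then for every y ∈ [0,1] there exists k ∈ {0,1,…,m} such that S̄(k/m, y) − S̄(q, y) ≤ 2L/m². -/

import Mathlib

/-- The affine extension of a scoring rule `S : [0,1] × {0,1} → ℝ` to
`S̄(x, p) = (1−p)·S(x,0) + p·S(x,1)`. -/
noncomputable def Sbar (S : ℝ → Fin 2 → ℝ) (x p : ℝ) : ℝ :=
  (1 - p) * S x 0 + p * S x 1

/-- A scoring rule is proper if truthfully reporting minimizes the expected score. -/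
def ProperScoringRule (S : ℝ → Fin 2 → ℝ) : Prop :=
  ∀ p ∈ Set.Icc (0:ℝ) 1, ∀ x ∈ Set.Icc (0:ℝ) 1, Sbar S p p ≤ Sbar S x p

/-- `S` is `L`-Lipschitz in its first argument on `[0,1]`. -/
def LipschitzScoringRule (S : ℝ → Fin 2 → ℝ) (L : ℝ) : Prop :=
  ∀ x ∈ Set.Icc (0:ℝ) 1, ∀ x' ∈ Set.Icc (0:ℝ) 1, ∀ y : Fin 2,
    |S x y - S x' y| ≤ L * |x - x'|


/-!
Round `y` down to the grid point `x = ⌊m y⌋ / m`, so that `0 ≤ y - x ≤ 1/m`. By properness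
at `y`, reporting `y` beats reporting `q`, so it suffices to bound `S̄(x, y) - S̄(y, y)`.
Adding the nonnegative term `S̄(y, x) - S̄(x, x)` (properness at `x`) turns this regret into
`(y - x)` times a difference of score differences, which the Lipschitz bound controls by
`2 L |x - y|`; hence the regret is at most `2 L (x - y)² ≤ 2 L / m²`.
-/

open Set

variable {S : ℝ → Fin 2 → ℝ} {L : ℝ}

theorem LipschitzScoringRule.nonneg (hS : LipschitzScoringRule S L) : 0 ≤ L := by
  have h := hS 0 (left_mem_Icc.2 zero_le_one) 1 (right_mem_Icc.2 zero_le_one) 0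
  norm_num at h
  exact (abs_nonneg _).trans h

theorem ProperScoringRule.Sbar_sub_Sbar_self_le (hS : ProperScoringRule S) {x y : ℝ}
    (hx : x ∈ Icc (0 : ℝ) 1) (hy : y ∈ Icc (0 : ℝ) 1) :
    Sbar S x y - Sbar S y y ≤ (y - x) * ((S x 1 - S y 1) - (S x 0 - S y 0)) := by
  have hxy : Sbar S x x ≤ Sbar S y x := hS x hx y hy
  have key : Sbar S x y - Sbar S y y + (Sbar S y x - Sbar S x x) =
      (y - x) * ((S x 1 - S y 1) - (S x 0 - S y 0)) := by
    simp only [Sbar]; ring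
  linarith

theorem ProperScoringRule.Sbar_sub_Sbar_self_le_of_lipschitz (hS : ProperScoringRule S)
    (hL : LipschitzScoringRule S L) {x y : ℝ} (hx : x ∈ Icc (0 : ℝ) 1)
    (hy : y ∈ Icc (0 : ℝ) 1) :
    Sbar S x y - Sbar S y y ≤ 2 * L * (x - y) ^ 2 := by
  have hdiff : |(S x 1 - S y 1) - (S x 0 - S y 0)| ≤ 2 * L * |x - y| := by
    calc |(S x 1 - S y 1) - (S x 0 - S y 0)|
        ≤ |S x 1 - S y 1| + |S x 0 - S y 0| := abs_sub _ _
      _ ≤ L * |x - y| + L * |x - y| := add_le_add (hL x hx y hy 1) (hL x hx y hy 0)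
      _ = 2 * L * |x - y| := by ring
  calc Sbar S x y - Sbar S y y
      ≤ (y - x) * ((S x 1 - S y 1) - (S x 0 - S y 0)) := hS.Sbar_sub_Sbar_self_le hx hy
    _ ≤ |y - x| * |(S x 1 - S y 1) - (S x 0 - S y 0)| := by
        rw [← abs_mul]; exact le_abs_self _
    _ ≤ |x - y| * (2 * L * |x - y|) := by
        rw [abs_sub_comm]; exact mul_le_mul_of_nonneg_left hdiff (abs_nonneg _)
    _ = 2 * L * (x - y) ^ 2 := by rw [← sq_abs (x - y)]; ring

theorem exists_nat_le_abs_div_sub_le {m : ℕ} (hm : 1 ≤ m) {y : ℝ} (hy : y ∈ Icc (0 : ℝ) 1) :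
    ∃ k : ℕ, k ≤ m ∧ |(k : ℝ) / m - y| ≤ 1 / m := by
  have hm0 : (0 : ℝ) < m := by exact_mod_cast hm
  refine ⟨⌊(m : ℝ) * y⌋₊, ?_, ?_⟩
  · exact_mod_cast (Nat.floor_le_floor (mul_le_of_le_one_right hm0.le hy.2)).trans_eq
      (Nat.floor_natCast m)
  · have hle : (⌊(m : ℝ) * y⌋₊ : ℝ) ≤ m * y := Nat.floor_le (mul_nonneg hm0.le hy.1)
    have hlt : (m : ℝ) * y < ⌊(m : ℝ) * y⌋₊ + 1 := Nat.lt_floor_add_one _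
    have hrescale : (⌊(m : ℝ) * y⌋₊ : ℝ) / m - y = (⌊(m : ℝ) * y⌋₊ - m * y) / m := by
      field_simp
    rw [hrescale, abs_div, abs_of_pos hm0, div_le_div_iff_of_pos_right hm0, abs_le]
    constructor <;> linarith

theorem stmt1 (S : ℝ → Fin 2 → ℝ) (L : ℝ)
    (hproper : ProperScoringRule S) (hlip : LipschitzScoringRule S L)
    (m : ℕ) (hm : 1 ≤ m) (q : ℝ) (hq : q ∈ Set.Icc (0:ℝ) 1) :
    ∀ y ∈ Set.Icc (0:ℝ) 1, ∃ k : ℕ, k ≤ m ∧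
      Sbar S ((k : ℝ) / m) y - Sbar S q y ≤ 2 * L / m ^ 2 := by
  intro y hy
  obtain ⟨k, hkm, hdist⟩ := exists_nat_le_abs_div_sub_le hm hy
  have hm0 : (0 : ℝ) < m := by exact_mod_cast hm
  have hx : (k : ℝ) / m ∈ Icc (0 : ℝ) 1 :=
    ⟨by positivity, (div_le_one hm0).2 (by exact_mod_cast hkm)⟩
  have hsq : ((k : ℝ) / m - y) ^ 2 ≤ 1 / m ^ 2 := by
    rw [← sq_abs, one_div, ← inv_pow, ← one_div]
    exact pow_le_pow_left₀ (abs_nonneg _) hdist 2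
  refine ⟨k, hkm, ?_⟩
  calc Sbar S ((k : ℝ) / m) y - Sbar S q y
      ≤ Sbar S ((k : ℝ) / m) y - Sbar S y y := by linarith [hproper y hy q hq]
    _ ≤ 2 * L * ((k : ℝ) / m - y) ^ 2 := hproper.Sbar_sub_Sbar_self_le_of_lipschitz hlip hx hy
    _ ≤ 2 * L * (1 / m ^ 2) := by gcongr; linarith [hlip.nonneg]
    _ = 2 * L / m ^ 2 := by ring
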